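/- arXiv:2310.04149 — 8 statements merged into one kernel-verified Lean document; each statement's English description precedes it below -/
import Mathlib

section
/- For n = 3 and for all n ≥ 5, every strong endomorphism of the cycle graph C_n is an automorphism, i.e. sEnd(C_n) = Aut(C_n). -/
/-- Adjacency in the cycle graph `C_n` on vertex set `ZMod n`. -/
def cycleAdj (n : ℕ) (u v : ZMod n) : Prop := v - u = 1 ∨ u - v = 1

/-- `α` is a strong endomorphism of `C_n`: `{u,v}` is an edge iff `{α u, α v}` is. -/
def IsStrongEndCycle (n : ℕ) (α : ZMod n → ZMod n) : Prop :=
  ∀ u v : ZMod n, cycleAdj n u v ↔ cycleAdj n (α u) (α v)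

/-!
A strong endomorphism `α` of `C_n` maps neighbours to neighbours, so every step `α (u + 1) - α u`
is `±1`. For `n = 3` all distinct vertices are adjacent, and adjacent vertices cannot share an
image, so `α` is injective. For `n ≥ 5`, `α (u + 2) = α u` is impossible: it would make the images
of the non-adjacent vertices `u` and `u + 3` adjacent. Hence consecutive steps agree, `α` is the
affine map `u ↦ α 0 + d * u` with `d = ±1`, and it is injective. On a finite vertex set injective
means bijective.
-/

theorem ZMod.induction_on {n : ℕ} [NeZero n] {P : ZMod n → Prop} (zero : P 0)
    (succ : ∀ u, P u → P (u + 1)) (u : ZMod n) : P u := by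
  rw [← ZMod.natCast_zmod_val u]
  induction u.val with
  | zero => simpa using zero
  | succ k ih => simpa using succ _ ih

theorem ZMod.natCast_ne_zero_of_lt {n k : ℕ} (hk : 0 < k) (hkn : k < n) : (k : ZMod n) ≠ 0 := by
  rw [Ne, ZMod.natCast_eq_zero_iff]
  exact fun h => (Nat.le_of_dvd hk h).not_gt hkn

section Cycle

variable {n : ℕ} {α : ZMod n → ZMod n} {u v : ZMod n}

theorem cycleAdj.ne [Nontrivial (ZMod n)] (h : cycleAdj n u v) : u ≠ v := by
  rintro rfl
  rcases h with h | h <;> simp at h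

theorem cycleAdj_three_of_ne {u v : ZMod 3} : u ≠ v → cycleAdj 3 u v := by
  unfold cycleAdj
  revert u v
  decide

theorem not_cycleAdj_add_three (hn : 5 ≤ n) (u : ZMod n) : ¬ cycleAdj n u (u + 3) := by
  have h2 : ((2 : ℕ) : ZMod n) ≠ 0 := ZMod.natCast_ne_zero_of_lt (by norm_num) (by omega)
  have h4 : ((4 : ℕ) : ZMod n) ≠ 0 := ZMod.natCast_ne_zero_of_lt (by norm_num) (by omega)
  push_cast at h2 h4
  rintro (h | h)
  · exact h2 (by linear_combination h)
  · exact h4 (by linear_combination -h)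

namespace IsStrongEndCycle

theorem map_ne_of_adj [Nontrivial (ZMod n)] (hα : IsStrongEndCycle n α) (h : cycleAdj n u v) :
    α u ≠ α v :=
  ((hα u v).mp h).ne

theorem injective_of_three {α : ZMod 3 → ZMod 3} (hα : IsStrongEndCycle 3 α) :
    Function.Injective α := by
  intro u v huv
  by_contra hne
  exact hα.map_ne_of_adj (cycleAdj_three_of_ne hne) huv

theorem step (hα : IsStrongEndCycle n α) (u : ZMod n) :
    α (u + 1) - α u = 1 ∨ α (u + 1) - α u = -1 := by
  rcases (hα u (u + 1)).mp (Or.inl (by ring)) with h | h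
  · exact Or.inl h
  · exact Or.inr (by linear_combination -h)

theorem map_add_two_ne (hn : 5 ≤ n) (hα : IsStrongEndCycle n α) (u : ZMod n) :
    α (u + 2) ≠ α u := by
  intro heq
  have hadj : cycleAdj n (α (u + 2)) (α (u + 2 + 1)) := (hα _ _).mp (Or.inl (by ring))
  rw [heq, show u + 2 + 1 = u + 3 by ring] at hadj
  exact not_cycleAdj_add_three hn u ((hα _ _).mpr hadj)

theorem step_add_one (hn : 5 ≤ n) (hα : IsStrongEndCycle n α) (u : ZMod n) :
    α (u + 1 + 1) - α (u + 1) = α (u + 1) - α u := by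
  have hback : α (u + 1 + 1) - α u ≠ 0 := by
    rw [sub_ne_zero, show u + 1 + 1 = u + 2 by ring]
    exact hα.map_add_two_ne hn u
  rcases hα.step u with h | h <;> rcases hα.step (u + 1) with h' | h'
  · rw [h, h']
  · exact absurd (by linear_combination h + h') hback
  · exact absurd (by linear_combination h + h') hback
  · rw [h, h']

theorem eq_add_mul (hn : 5 ≤ n) (hα : IsStrongEndCycle n α) (u : ZMod n) :
    α u = α 0 + (α 1 - α 0) * u := by
  have : NeZero n := ⟨by omega⟩
  have hconst : ∀ u, α (u + 1) - α u = α 1 - α 0 :=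
    ZMod.induction_on (by simp) fun u ih => (hα.step_add_one hn u).trans ih
  induction u using ZMod.induction_on with
  | zero => simp
  | succ u ih => linear_combination hconst u + ih

theorem injective_of_five_le (hn : 5 ≤ n) (hα : IsStrongEndCycle n α) :
    Function.Injective α := by
  intro a b hab
  have hd : (α 1 - α 0) * (α 1 - α 0) = 1 := by
    rcases hα.step 0 with h | h <;> simp only [zero_add] at h <;> rw [h] <;> norm_num
  rw [hα.eq_add_mul hn a, hα.eq_add_mul hn b] at hab
  linear_combination (α 1 - α 0) * hab - (a - b) * hd

end IsStrongEndCycle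

end Cycle

/-- For `n = 3` and for all `n ≥ 5`, every strong endomorphism of `C_n` is an
automorphism (a bijective strong endomorphism): `sEnd(C_n) = Aut(C_n)`. -/
theorem sEnd_eq_aut (n : ℕ) (hn : n = 3 ∨ 5 ≤ n) :
    {α : ZMod n → ZMod n | IsStrongEndCycle n α} =
      {α : ZMod n → ZMod n | Function.Bijective α ∧ IsStrongEndCycle n α} := by
  ext α
  refine ⟨fun hα => ⟨?_, hα⟩, And.right⟩
  have : NeZero n := ⟨by omega⟩
  refine Finite.injective_iff_bijective.mp ?_
  rcases hn with rfl | hn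
  · exact IsStrongEndCycle.injective_of_three hα
  · exact IsStrongEndCycle.injective_of_five_le hn hα
end

section
/- Let α be a weak endomorphism of the cycle graph C_n and let 1 ≤ i ≤ j ≤ n. Then the image of the interval [i,j] under α is an arc of {1,...,n}, i.e. either an interval [a,b] with 1 ≤ a ≤ b ≤ n, or a set of the form [b,n] ∪ [1,a] with 1 ≤ a ≤ b ≤ n. -/
/-- `α` is a weak endomorphism of the cycle graph `C_n` on `ZMod n`:
consecutive vertices have images differing by `0`, `1` or `-1` (i.e. `n-1`) mod `n`. -/
def IsWeakEndCycle (n : ℕ) (α : ZMod n → ZMod n) : Prop :=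
  ∀ i : ZMod n, α (i + 1) - α i ∈ ({0, 1, -1} : Set (ZMod n))

/-- The subset of `ZMod n` corresponding to the interval `[i,j] = {i, i+1, …, j}`
of `{1,…,n}`. -/
def natInterval (n i j : ℕ) : Set (ZMod n) := (fun x : ℕ => (x : ZMod n)) '' Set.Icc i j

/-!
Call `{c, c + 1, …, c + l}` an arc. Since `α` moves by at most one step between consecutive
points, adding the next point `x + 1` of an arc to its image adds a point adjacent to the image of
`x`, so the image stays an arc; by induction the image of an arc is an arc. In `ZMod n` an arc
starting at a representative `a ∈ [1, n]` of `c` is `[a, a + l]` if it does not pass `n`, and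
`[a, n] ∪ [1, a + l - n]` otherwise.
-/

section Arc

variable {R : Type*} [AddCommGroupWithOne R]

def arc (c : R) (l : ℕ) : Set R := (fun k : ℕ => c + k) '' Set.Iic l

lemma mem_arc {c x : R} {l : ℕ} : x ∈ arc c l ↔ ∃ k ≤ l, c + k = x := Iff.rfl

lemma arc_zero (c : R) : arc c 0 = {c} := by
  ext x
  simp [mem_arc, eq_comm]

lemma arc_add (c : R) (l m : ℕ) : arc c (l + m + 1) = arc c l ∪ arc (c + (l + 1 : ℕ)) m := by
  ext x
  simp only [Set.mem_union, mem_arc]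
  constructor
  · rintro ⟨k, hk, rfl⟩
    rcases le_or_gt k l with hkl | hlk
    · exact Or.inl ⟨k, hkl, rfl⟩
    · refine Or.inr ⟨k - (l + 1), by omega, ?_⟩
      rw [add_assoc, ← Nat.cast_add, Nat.add_sub_cancel' hlk]
  · rintro (⟨k, hk, rfl⟩ | ⟨k, hk, rfl⟩)
    · exact ⟨k, by omega, rfl⟩
    · exact ⟨l + 1 + k, by omega, by push_cast; abel⟩

lemma arc_succ (c : R) (l : ℕ) : arc c (l + 1) = insert (c + (l + 1 : ℕ)) (arc c l) := by
  simpa only [add_zero, arc_zero, Set.union_singleton] using arc_add c l 0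

lemma arc_succ_sub_one (c : R) (l : ℕ) : arc (c - 1) (l + 1) = insert (c - 1) (arc c l) := by
  simpa only [zero_add, Nat.cast_one, sub_add_cancel, arc_zero, Set.singleton_union] using
    arc_add (c - 1) 0 l

lemma exists_insert_add_eq_arc {c y d : R} {l : ℕ} (hy : y ∈ arc c l)
    (hd : d ∈ ({0, 1, -1} : Set R)) : ∃ c' l', insert (y + d) (arc c l) = arc c' l' := by
  obtain ⟨k, hk, rfl⟩ := mem_arc.1 hy
  rcases hd with rfl | rfl | rfl
  · exact ⟨c, l, Set.insert_eq_of_mem (mem_arc.2 ⟨k, hk, (add_zero _).symm⟩)⟩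
  · rcases hk.lt_or_eq with hkl | rfl
    · exact ⟨c, l, Set.insert_eq_of_mem (mem_arc.2 ⟨k + 1, hkl, by push_cast; abel⟩)⟩
    · exact ⟨c, k + 1, by rw [arc_succ, Nat.cast_succ, add_assoc]⟩
  · rcases Nat.eq_zero_or_pos k with rfl | hk0
    · exact ⟨c - 1, l + 1, by rw [arc_succ_sub_one, Nat.cast_zero, add_zero, sub_eq_add_neg]⟩
    · refine ⟨c, l, Set.insert_eq_of_mem (mem_arc.2 ⟨k - 1, by omega, ?_⟩)⟩
      rw [Nat.cast_sub hk0, Nat.cast_one]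
      abel

lemma exists_image_arc_eq_arc {f : R → R} (hf : ∀ x, f (x + 1) - f x ∈ ({0, 1, -1} : Set R))
    (c : R) (l : ℕ) : ∃ c' l', f '' arc c l = arc c' l' := by
  induction l with
  | zero => exact ⟨f c, 0, by rw [arc_zero, Set.image_singleton, arc_zero]⟩
  | succ l ih =>
    obtain ⟨c', l', himg⟩ := ih
    have hlast : f (c + (l + 1 : ℕ)) = f (c + l) + (f (c + l + 1) - f (c + l)) := by
      rw [add_sub_cancel, Nat.cast_succ, add_assoc]
    have hmem : f (c + l) ∈ arc c' l' :=
      himg ▸ Set.mem_image_of_mem f (mem_arc.2 ⟨l, le_rfl, rfl⟩)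
    rw [arc_succ, Set.image_insert_eq, himg, hlast]
    exact exists_insert_add_eq_arc hmem (hf _)

end Arc

section ZMod

variable {n : ℕ}

lemma natInterval_eq_arc {i j : ℕ} (hij : i ≤ j) :
    natInterval n i j = arc (i : ZMod n) (j - i) := by
  ext x
  simp only [natInterval, Set.mem_image, Set.mem_Icc, mem_arc]
  constructor
  · rintro ⟨m, ⟨him, hmj⟩, rfl⟩
    exact ⟨m - i, by omega, by rw [← Nat.cast_add, Nat.add_sub_cancel' him]⟩
  · rintro ⟨k, hk, rfl⟩
    exact ⟨i + k, by omega, by push_cast; rfl⟩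

lemma arc_eq_univ [NeZero n] (c : ZMod n) {l : ℕ} (hl : n ≤ l + 1) : arc c l = Set.univ := by
  refine Set.eq_univ_of_forall fun x => mem_arc.2 ⟨(x - c).val, ?_, by simp⟩
  have := ZMod.val_lt (x - c)
  omega

lemma exists_mem_Icc_natCast_eq [NeZero n] (c : ZMod n) :
    ∃ a ∈ Set.Icc 1 n, (a : ZMod n) = c :=
  ⟨(c - 1).val + 1, ⟨by omega, ZMod.val_lt (c - 1)⟩, by simp⟩

lemma arc_eq_natInterval_or [NeZero n] (c : ZMod n) (l : ℕ) :
    ∃ a b : ℕ, 1 ≤ a ∧ a ≤ b ∧ b ≤ n ∧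
      (arc c l = natInterval n a b ∨ arc c l = natInterval n b n ∪ natInterval n 1 a) := by
  have hn : 1 ≤ n := Nat.pos_of_neZero n
  by_cases hfull : n ≤ l + 1
  · refine ⟨1, n, le_rfl, hn, le_rfl, Or.inl ?_⟩
    rw [natInterval_eq_arc hn, arc_eq_univ c hfull, arc_eq_univ _ (by omega)]
  obtain ⟨a, ⟨ha1, han⟩, rfl⟩ := exists_mem_Icc_natCast_eq c
  by_cases hwrap : a + l ≤ n
  · refine ⟨a, a + l, ha1, by omega, hwrap, Or.inl ?_⟩
    rw [natInterval_eq_arc (by omega), Nat.add_sub_cancel_left]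
  · refine ⟨a + l - n, a, by omega, by omega, han, Or.inr ?_⟩
    have hsplit : l = (n - a) + (a + l - n - 1) + 1 := by omega
    have hone : ((a : ZMod n) + (n - a + 1 : ℕ)) = ((1 : ℕ) : ZMod n) := by
      rw [← Nat.cast_add, show a + (n - a + 1) = 1 + n by omega, Nat.cast_add, ZMod.natCast_self,
        add_zero]
    rw [natInterval_eq_arc han, natInterval_eq_arc (by omega), hsplit, arc_add, hone]
    congr 2
    omega

end ZMod

theorem image_interval_isArc_general (n : ℕ) (α : ZMod n → ZMod n)
    (hα : IsWeakEndCycle n α) (i j : ℕ) (h1 : 1 ≤ i) (hij : i ≤ j) (hj : j ≤ n) :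
    ∃ a b : ℕ, 1 ≤ a ∧ a ≤ b ∧ b ≤ n ∧
      (α '' natInterval n i j = natInterval n a b ∨
        α '' natInterval n i j = natInterval n b n ∪ natInterval n 1 a) := by
  have : NeZero n := ⟨by omega⟩
  obtain ⟨c, l, himg⟩ := exists_image_arc_eq_arc hα (i : ZMod n) (j - i)
  rw [natInterval_eq_arc hij, himg]
  exact arc_eq_natInterval_or c l

/-- The image of an interval `[i,j]` (with `1 ≤ i ≤ j ≤ n`) under a weak endomorphism of
`C_n` is an arc: either an interval `[a,b]` or a wrap-around `[b,n] ∪ [1,a]`. -/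
theorem image_interval_isArc (n : ℕ) (hn : 3 ≤ n) (α : ZMod n → ZMod n)
    (hα : IsWeakEndCycle n α) (i j : ℕ) (h1 : 1 ≤ i) (hij : i ≤ j) (hj : j ≤ n) :
    ∃ a b : ℕ, 1 ≤ a ∧ a ≤ b ∧ b ≤ n ∧
      (α '' natInterval n i j = natInterval n a b ∨
        α '' natInterval n i j = natInterval n b n ∪ natInterval n 1 a) :=
  image_interval_isArc_general n α hα i j h1 hij hj
end

section
/- Let α be a weak endomorphism of the cycle graph C_n. Then either α is a permutation belonging to the dihedral group D_{2n}, or the rank (image size) of α is at most ⌊n/2⌋ + 1. -/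
/-- The dihedral group `D_{2n}` of automorphisms of `C_n`, generated by the rotation
`i ↦ i + 1` and the reflection `i ↦ 1 - i` (i.e. `i ↦ n - i + 1` mod `n`). -/
def dihedralCycle (n : ℕ) : Subgroup (Equiv.Perm (ZMod n)) :=
  Subgroup.closure {Equiv.addRight (1 : ZMod n), Equiv.subLeft (1 : ZMod n)}

open Finset

section IntegerWalk

variable {β : ℕ → ℤ}

theorem abs_sub_le_of_abs_step_le_one (hβ : ∀ k, |β (k + 1) - β k| ≤ 1) {i j : ℕ}
    (hij : i ≤ j) : |β j - β i| ≤ j - i := by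
  induction j, hij using Nat.le_induction with
  | base => simp
  | succ j _ ih =>
    calc |β (j + 1) - β i| ≤ |β (j + 1) - β j| + |β j - β i| := abs_sub_le _ _ _
      _ ≤ 1 + (j - i) := add_le_add (hβ j) ih
      _ = ((j + 1 : ℕ) : ℤ) - i := by push_cast; ring

theorem eq_add_of_abs_step_le_one_of_sub_eq (hβ : ∀ k, |β (k + 1) - β k| ≤ 1) {n : ℕ}
    (hn : β n - β 0 = n) {k : ℕ} (hk : k ≤ n) : β k = β 0 + k := by
  have h₁ := abs_le.mp (abs_sub_le_of_abs_step_le_one hβ (Nat.zero_le k))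
  have h₂ := abs_le.mp (abs_sub_le_of_abs_step_le_one hβ hk)
  push_cast at h₁
  omega

theorem two_mul_abs_sub_le_of_abs_step_le_one_of_eq (hβ : ∀ k, |β (k + 1) - β k| ≤ 1)
    {n : ℕ} (hn : β n = β 0) {i j : ℕ} (hi : i ≤ n) (hj : j ≤ n) : 2 * |β i - β j| ≤ n := by
  wlog hij : i ≤ j generalizing i j
  · rw [abs_sub_comm]; exact this hj hi (by omega)
  have h₁ := abs_le.mp (abs_sub_le_of_abs_step_le_one hβ (Nat.zero_le i))
  have h₂ := abs_le.mp (abs_sub_le_of_abs_step_le_one hβ hij)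
  have h₃ := abs_le.mp (abs_sub_le_of_abs_step_le_one hβ hj)
  push_cast at h₁
  cases abs_cases (β i - β j) <;> omega

theorem Finset.card_le_of_forall_sub_le {s : Finset ℤ} {d : ℕ}
    (h : ∀ a ∈ s, ∀ b ∈ s, a - b ≤ d) : #s ≤ d + 1 := by
  rcases s.eq_empty_or_nonempty with rfl | hs
  · simp
  calc #s ≤ #(Icc (s.min' hs) (s.min' hs + d)) := card_le_card fun a ha =>
        mem_Icc.mpr ⟨s.min'_le a ha, by linarith [h a ha _ (s.min'_mem hs)]⟩
    _ = d + 1 := by rw [Int.card_Icc]; omega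

theorem card_image_range_le_of_abs_step_le_one_of_eq (hβ : ∀ k, |β (k + 1) - β k| ≤ 1)
    {n : ℕ} (hn : β n = β 0) : #((range n).image β) ≤ n / 2 + 1 := by
  apply Finset.card_le_of_forall_sub_le
  simp only [mem_image, mem_range]
  rintro _ ⟨i, hi, rfl⟩ _ ⟨j, hj, rfl⟩
  have := two_mul_abs_sub_le_of_abs_step_le_one_of_eq hβ hn hi.le hj.le
  cases abs_cases (β i - β j) <;> omega

end IntegerWalk

theorem Int.eq_zero_or_eq_or_eq_neg_of_dvd_of_abs_le {a b : ℤ} (ha : 0 < a) (hdvd : a ∣ b)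
    (hb : |b| ≤ a) : b = 0 ∨ b = a ∨ b = -a := by
  obtain ⟨c, rfl⟩ := hdvd
  rw [abs_mul, abs_of_pos ha] at hb
  obtain ⟨h₁, h₂⟩ := abs_le.mp (le_of_mul_le_mul_left (by linarith) ha : |c| ≤ 1)
  interval_cases c <;> simp

theorem ZMod.abs_valMinAbs_le_one {n : ℕ} [NeZero n] {x : ZMod n}
    (hx : x ∈ ({0, 1, -1} : Set (ZMod n))) : |x.valMinAbs| ≤ 1 := by
  suffices h : (1 : ZMod n).valMinAbs.natAbs ≤ 1 by
    rcases hx with rfl | rfl | rfl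
    · simp
    · rw [Int.abs_eq_natAbs]; exact_mod_cast h
    · rw [Int.abs_eq_natAbs, ZMod.natAbs_valMinAbs_neg]; exact_mod_cast h
  rw [ZMod.valMinAbs_natAbs_eq_min, ZMod.val_one_eq_one_mod]
  exact (min_le_left _ _).trans (Nat.mod_le _ _)

theorem addRight_mem_dihedralCycle {n : ℕ} (c : ZMod n) :
    Equiv.addRight c ∈ dihedralCycle n := by
  have : Equiv.addRight c = Equiv.addRight 1 ^ c.valMinAbs := by simp [ZMod.coe_valMinAbs]
  rw [this]
  exact zpow_mem (Subgroup.subset_closure (Set.mem_insert _ _)) _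

theorem subLeft_mem_dihedralCycle {n : ℕ} (c : ZMod n) :
    Equiv.subLeft c ∈ dihedralCycle n := by
  have : Equiv.subLeft c = Equiv.addRight (c - 1) * Equiv.subLeft 1 := by
    ext x; simp only [Equiv.Perm.mul_apply, Equiv.coe_addRight, Equiv.subLeft_apply]; ring
  rw [this]
  exact mul_mem (addRight_mem_dihedralCycle _)
    (Subgroup.subset_closure (Set.mem_insert_of_mem _ rfl))

section CycleLift

variable {n : ℕ} {α : ZMod n → ZMod n}

variable (α) in
def cycleLift (k : ℕ) : ℤ := ∑ j ∈ range k, (α (j + 1) - α j).valMinAbs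

variable (α) in
@[simp]
theorem cycleLift_zero : cycleLift α 0 = 0 := rfl

variable (α) in
theorem cycleLift_succ (k : ℕ) :
    cycleLift α (k + 1) = cycleLift α k + (α (k + 1) - α k).valMinAbs :=
  sum_range_succ _ _

variable (α) in
theorem apply_natCast_eq_add_cycleLift (k : ℕ) : α k = α 0 + cycleLift α k := by
  induction k with
  | zero => simp
  | succ k ih =>
    rw [cycleLift_succ, Int.cast_add, ZMod.coe_valMinAbs, ← add_assoc, ← ih, Nat.cast_succ]
    ring

variable [NeZero n]

variable (α) in
theorem apply_eq_add_cycleLift_val (i : ZMod n) : α i = α 0 + cycleLift α i.val := by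
  rw [← apply_natCast_eq_add_cycleLift, ZMod.natCast_zmod_val]

theorem abs_cycleLift_step_le_one (hα : IsWeakEndCycle n α) (k : ℕ) :
    |cycleLift α (k + 1) - cycleLift α k| ≤ 1 := by
  simpa [cycleLift_succ] using ZMod.abs_valMinAbs_le_one (hα k)

theorem cycleLift_self_eq_zero_or_eq_or_eq_neg (hα : IsWeakEndCycle n α) :
    cycleLift α n = 0 ∨ cycleLift α n = n ∨ cycleLift α n = -n := by
  have hdvd : (n : ℤ) ∣ cycleLift α n := by
    rw [← ZMod.intCast_zmod_eq_zero_iff_dvd]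
    have := apply_natCast_eq_add_cycleLift α n
    rw [ZMod.natCast_self] at this
    linear_combination -this
  have hle : |cycleLift α n| ≤ n := by
    simpa using abs_sub_le_of_abs_step_le_one (abs_cycleLift_step_le_one hα) (Nat.zero_le n)
  exact Int.eq_zero_or_eq_or_eq_neg_of_dvd_of_abs_le (by exact_mod_cast Nat.pos_of_neZero n)
    hdvd hle

theorem ncard_range_le_card_image_cycleLift :
    (Set.range α).ncard ≤ #((range n).image (cycleLift α)) := by
  have hsub : Set.range α ⊆ ((range n).image (cycleLift α)).image fun z : ℤ => α 0 + z := by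
    rintro _ ⟨i, rfl⟩
    simp only [coe_image, coe_range]
    exact ⟨_, ⟨i.val, i.val_lt, rfl⟩, (apply_eq_add_cycleLift_val α i).symm⟩
  calc (Set.range α).ncard ≤ #(((range n).image (cycleLift α)).image fun z : ℤ => α 0 + z) := by
        rw [← Set.ncard_coe_finset]; exact Set.ncard_le_ncard hsub (finite_toSet _)
    _ ≤ #((range n).image (cycleLift α)) := card_image_le

theorem eq_addRight_of_cycleLift_self_eq (hα : IsWeakEndCycle n α)
    (h : cycleLift α n = n) : α = Equiv.addRight (α 0) := by
  funext i
  have := eq_add_of_abs_step_le_one_of_sub_eq (abs_cycleLift_step_le_one hα)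
    (by rw [h, cycleLift_zero, sub_zero]) i.val_lt.le
  rw [apply_eq_add_cycleLift_val α i, this, cycleLift_zero, Equiv.coe_addRight]
  push_cast [ZMod.natCast_zmod_val]
  ring

theorem eq_subLeft_of_cycleLift_self_eq_neg (hα : IsWeakEndCycle n α)
    (h : cycleLift α n = -n) : α = Equiv.subLeft (α 0) := by
  have hstep (k : ℕ) : |-cycleLift α (k + 1) - -cycleLift α k| ≤ 1 := by
    rw [neg_sub_neg, abs_sub_comm]; exact abs_cycleLift_step_le_one hα k
  funext i
  have := eq_add_of_abs_step_le_one_of_sub_eq (β := fun k => -cycleLift α k) hstep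
    (by rw [h, cycleLift_zero, neg_zero, sub_zero, neg_neg]) i.val_lt.le
  rw [apply_eq_add_cycleLift_val α i, neg_eq_iff_eq_neg.mp this, cycleLift_zero,
    Equiv.subLeft_apply]
  push_cast [ZMod.natCast_zmod_val]
  ring

end CycleLift

/-- A weak endomorphism of `C_n` is either a permutation in `D_{2n}`, or has rank
(image size) at most `⌊n/2⌋ + 1`. -/
theorem wEnd_dihedral_or_rank_le (n : ℕ) (hn : 3 ≤ n) (α : ZMod n → ZMod n)
    (hα : IsWeakEndCycle n α) :
    (∃ σ ∈ dihedralCycle n, α = ⇑σ) ∨ (Set.range α).ncard ≤ n / 2 + 1 := by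
  have : NeZero n := ⟨by omega⟩
  rcases cycleLift_self_eq_zero_or_eq_or_eq_neg hα with h | h | h
  · right
    calc (Set.range α).ncard ≤ #((range n).image (cycleLift α)) :=
          ncard_range_le_card_image_cycleLift
      _ ≤ n / 2 + 1 := card_image_range_le_of_abs_step_le_one_of_eq
          (abs_cycleLift_step_le_one hα) (by rw [h, cycleLift_zero])
  · exact .inl ⟨_, addRight_mem_dihedralCycle _, eq_addRight_of_cycleLift_self_eq hα h⟩
  · exact .inl ⟨_, subLeft_mem_dihedralCycle _, eq_subLeft_of_cycleLift_self_eq_neg hα h⟩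
end

section
/- For n ≥ 4, the monoid of strong weak endomorphisms of the cycle graph C_n equals the union of the strong endomorphisms and the n constant maps: swEnd(C_n) = sEnd(C_n) ∪ K_n. -/
/-- `α` is a strong weak endomorphism of `C_n`. -/
def IsStrongWeakEndCycle (n : ℕ) (α : ZMod n → ZMod n) : Prop :=
  ∀ u v : ZMod n, (cycleAdj n u v ∧ α u ≠ α v) ↔ cycleAdj n (α u) (α v)

/-!
If a strong weak endomorphism `α` collapses the edge `{u, u+1}` but not `{u+1, u+2}`, then
`α u = α (u+1)` is adjacent to `α (u+2)`, which forces `u` and `u+2` to be adjacent; this is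
impossible as soon as `3 ≠ 0` in `ZMod n`. So one collapsed edge propagates around the whole
cycle and `α` is constant. If no edge is collapsed, the "`α u ≠ α v`" clause of the strong weak
condition is automatic on edges and `α` is a strong endomorphism.
-/

lemma cycleAdj_add_one {n : ℕ} (u : ZMod n) : cycleAdj n u (u + 1) :=
  Or.inl (by ring)

lemma cycleAdj_irrefl {n : ℕ} (h1 : (1 : ZMod n) ≠ 0) (u : ZMod n) : ¬ cycleAdj n u u := by
  rintro (h | h) <;> exact h1 (by rw [← h, sub_self])

lemma not_cycleAdj_add_two {n : ℕ} (h3 : (3 : ZMod n) ≠ 0) (u : ZMod n) :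
    ¬ cycleAdj n u (u + 1 + 1) := by
  rintro (h | h)
  · exact h3 (by linear_combination 3 * h)
  · exact h3 (by linear_combination -h)

lemma ZMod.ofNat_ne_zero_of_lt {n : ℕ} (k : ℕ) [hk : k.AtLeastTwo] (hkn : k < n) :
    (OfNat.ofNat k : ZMod n) ≠ 0 := by
  intro h
  have hdvd := (ZMod.natCast_eq_zero_iff k n).1 (by exact_mod_cast h)
  have := hk.prop
  exact absurd (Nat.le_of_dvd (by omega) hdvd) (by omega)

namespace IsStrongEndCycle

lemma isStrongWeakEndCycle {n : ℕ} (h1 : (1 : ZMod n) ≠ 0) {α : ZMod n → ZMod n}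
    (hα : IsStrongEndCycle n α) : IsStrongWeakEndCycle n α := fun u v =>
  ⟨fun h => (hα u v).1 h.1,
    fun h => ⟨(hα u v).2 h, fun he => cycleAdj_irrefl h1 (α v) (he ▸ h)⟩⟩

end IsStrongEndCycle

lemma isStrongWeakEndCycle_const {n : ℕ} (h1 : (1 : ZMod n) ≠ 0) (c : ZMod n) :
    IsStrongWeakEndCycle n (Function.const (ZMod n) c) := fun _ _ =>
  ⟨fun h => absurd rfl h.2, fun h => absurd h (cycleAdj_irrefl h1 c)⟩

namespace IsStrongWeakEndCycle

variable {n : ℕ} {α : ZMod n → ZMod n}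

lemma isStrongEndCycle (hα : IsStrongWeakEndCycle n α) (hne : ∀ u, α u ≠ α (u + 1)) :
    IsStrongEndCycle n α := by
  intro u v
  refine ⟨fun huv => (hα u v).1 ⟨huv, ?_⟩, fun h => ((hα u v).2 h).1⟩
  rcases huv with h | h
  · rw [← sub_add_cancel v u, h, add_comm]
    exact hne u
  · rw [← sub_add_cancel u v, h, add_comm]
    exact (hne v).symm

lemma eq_add_one_add_one (h3 : (3 : ZMod n) ≠ 0) (hα : IsStrongWeakEndCycle n α) {u : ZMod n}
    (hu : α u = α (u + 1)) : α (u + 1) = α (u + 1 + 1) := by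
  by_contra hne
  have hadj := (hα _ _).1 ⟨cycleAdj_add_one (u + 1), hne⟩
  rw [← hu] at hadj
  exact not_cycleAdj_add_two h3 u ((hα _ _).2 hadj).1

lemma eq_of_eq_add_one [NeZero n] (h3 : (3 : ZMod n) ≠ 0) (hα : IsStrongWeakEndCycle n α)
    {u : ZMod n} (hu : α u = α (u + 1)) (v : ZMod n) : α v = α u := by
  have hstep : ∀ k : ℕ, α (u + k) = α (u + k + 1) := by
    intro k
    induction k with
    | zero => simpa using hu
    | succ k ih => simpa [add_assoc] using hα.eq_add_one_add_one h3 ih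
  have hconst : ∀ k : ℕ, α (u + k) = α u := by
    intro k
    induction k with
    | zero => simp
    | succ k ih => rw [Nat.cast_succ, ← add_assoc, ← hstep k, ih]
  simpa using hconst (v - u).val

end IsStrongWeakEndCycle

/-- For `n ≥ 4`, the strong weak endomorphisms of `C_n` are exactly the strong
endomorphisms together with the `n` constant maps: `swEnd(C_n) = sEnd(C_n) ∪ K_n`. -/
theorem swEnd_eq_sEnd_union_const (n : ℕ) (hn : 4 ≤ n) :
    {α : ZMod n → ZMod n | IsStrongWeakEndCycle n α} =
      {α : ZMod n → ZMod n | IsStrongEndCycle n α} ∪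
        {α : ZMod n → ZMod n | ∃ c : ZMod n, α = Function.const (ZMod n) c} := by
  have : NeZero n := ⟨by omega⟩
  have h3 : (3 : ZMod n) ≠ 0 := ZMod.ofNat_ne_zero_of_lt 3 (by omega)
  have h1 : (1 : ZMod n) ≠ 0 := fun h => h3 (by linear_combination 3 * h)
  ext α
  constructor
  · intro hα
    by_cases hcollapse : ∃ u, α u = α (u + 1)
    · obtain ⟨u, hu⟩ := hcollapse
      exact Or.inr ⟨α u, funext (hα.eq_of_eq_add_one h3 hu)⟩
    · rw [not_exists] at hcollapse
      exact Or.inl (hα.isStrongEndCycle hcollapse)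
  · rintro (hα | ⟨c, rfl⟩)
    · exact hα.isStrongWeakEndCycle h1
    · exact isStrongWeakEndCycle_const h1 c
end

section
/- For even n ≥ 4, the number of endomorphisms of the cycle graph C_n is 2n + n·C(n, n/2), where C(n, n/2) is the central binomial coefficient. -/
/-!
An endomorphism `α` of `C_n` is determined by `α 0` and its steps `α (i + 1) - α i ∈ {±1}`, and a
step sequence comes from a map on `ZMod n` exactly when its sum vanishes. If `S` is the set of
`+1` steps, that sum is `2|S| - n`, which is `0` in `ZMod n` exactly when `|S| ∈ {0, n/2, n}`.
This gives `n · (1 + C(n, n/2) + 1)` endomorphisms.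
-/

/-- `α` is an endomorphism of the cycle graph `C_n` on `ZMod n`:
consecutive vertices have images differing by `1` or `-1` (i.e. `n-1`) mod `n`. -/
def IsEndCycle (n : ℕ) (α : ZMod n → ZMod n) : Prop :=
  ∀ i : ZMod n, α (i + 1) - α i ∈ ({1, -1} : Set (ZMod n))

open Finset

namespace ZMod

variable {n : ℕ} {G : Type*} [AddCommGroup G]

def cycleDiff (α : ZMod n → G) (i : ZMod n) : G := α (i + 1) - α i

def cyclePrimitive (c : G) (ε : ZMod n → G) (j : ZMod n) : G :=
  c + ∑ k ∈ range j.val, ε k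

theorem cyclePrimitive_zero (c : G) (ε : ZMod n → G) : cyclePrimitive c ε 0 = c := by
  simp [cyclePrimitive]

variable [NeZero n]

theorem val_add_one (i : ZMod n) : (i + 1).val = (i.val + 1) % n := by
  rw [← val_natCast, Nat.cast_succ, natCast_zmod_val]

theorem sum_range_natCast (f : ZMod n → G) : ∑ k ∈ range n, f k = ∑ i, f i :=
  sum_nbij' (fun k => (k : ZMod n)) val (by simp) (fun i _ => mem_range.2 i.val_lt)
    (fun k hk => val_cast_of_lt (mem_range.1 hk)) (fun i _ => natCast_zmod_val i) (by simp)

theorem sum_cycleDiff (α : ZMod n → G) : ∑ i, cycleDiff α i = 0 := by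
  simp only [cycleDiff, sum_sub_distrib]
  exact sub_eq_zero.2 (Equiv.sum_comp (Equiv.addRight 1) α)

theorem cycleDiff_cyclePrimitive (c : G) {ε : ZMod n → G} (hε : ∑ i, ε i = 0) :
    cycleDiff (cyclePrimitive c ε) = ε := by
  funext i
  have hsucc := sum_range_succ (fun k : ℕ => ε k) i.val
  rw [natCast_zmod_val] at hsucc
  simp only [cycleDiff, cyclePrimitive, add_sub_add_left_eq_sub, val_add_one]
  rcases lt_or_eq_of_le (Nat.succ_le_of_lt i.val_lt) with hlt | hwrap
  · rw [Nat.mod_eq_of_lt hlt, hsucc, add_sub_cancel_left]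
  · rw [Nat.succ_eq_add_one] at hwrap
    rw [hwrap, sum_range_natCast, hε] at hsucc
    rw [hwrap, Nat.mod_self, range_zero, sum_empty, zero_sub, neg_eq_iff_add_eq_zero, hsucc]

theorem cyclePrimitive_cycleDiff (α : ZMod n → G) : cyclePrimitive (α 0) (cycleDiff α) = α := by
  funext j
  have := sum_range_sub (fun k : ℕ => α k) j.val
  simp only [Nat.cast_succ] at this
  rw [cyclePrimitive]
  simp only [cycleDiff, this, natCast_zmod_val, Nat.cast_zero]
  abel

def cycleDiffEquiv (P : G → Prop) :
    {α : ZMod n → G // ∀ i, P (cycleDiff α i)} ≃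
      G × {ε : ZMod n → G // ∑ i, ε i = 0 ∧ ∀ i, P (ε i)} where
  toFun α := (α.1 0, ⟨cycleDiff α.1, sum_cycleDiff α.1, α.2⟩)
  invFun p := ⟨cyclePrimitive p.1 p.2.1, by
    rw [cycleDiff_cyclePrimitive _ p.2.2.1]
    exact p.2.2.2⟩
  left_inv α := Subtype.ext (cyclePrimitive_cycleDiff α.1)
  right_inv p :=
    Prod.ext (cyclePrimitive_zero _ _) (Subtype.ext (cycleDiff_cyclePrimitive _ p.2.2.1))

end ZMod

section SignFunctions

variable {ι R : Type*} [Fintype ι] [DecidableEq ι] [Ring R]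

def signFunEquivFinset [DecidableEq R] (h : (1 : R) ≠ -1) (P : (ι → R) → Prop) :
    {ε : ι → R // P ε ∧ ∀ i, ε i ∈ ({1, -1} : Set R)} ≃
      {S : Finset ι // P fun i => if i ∈ S then 1 else -1} where
  toFun ε := ⟨({i | ε.1 i = 1} : Finset ι), by
    convert ε.2.1 using 2 with i
    rcases ε.2.2 i with h1 | h1 <;> simp_all⟩
  invFun S := ⟨_, S.2, fun i => by split_ifs <;> simp⟩
  left_inv ε := by
    ext i
    rcases ε.2.2 i with h1 | h1 <;> simp_all
  right_inv S := by
    ext i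
    by_cases hi : i ∈ S.1 <;> simp [hi, h.symm]

theorem sum_ite_mem_one_neg_one (S : Finset ι) :
    ∑ i, (if i ∈ S then (1 : R) else -1) = 2 * #S - Fintype.card ι := by
  rw [sum_ite, sum_const, sum_const, filter_mem_eq_inter, univ_inter, filter_not,
    filter_mem_eq_inter, univ_inter, ← compl_eq_univ_sdiff, card_compl, nsmul_eq_mul,
    nsmul_eq_mul, Nat.cast_sub (card_le_univ S), mul_one, mul_neg_one, two_mul]
  abel

end SignFunctions

theorem card_filter_card_mem {ι : Type*} [Fintype ι] (K : Finset ℕ) :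
    #{S : Finset ι | #S ∈ K} = ∑ k ∈ K, (Fintype.card ι).choose k := by
  rw [← sum_card_fiberwise_eq_card_filter]
  simp

theorem Nat.dvd_two_mul_iff_of_even {n k : ℕ} (hn : Even n) (hk : k ≤ n) :
    n ∣ 2 * k ↔ k ∈ ({0, n / 2, n} : Finset ℕ) := by
  obtain ⟨m, rfl⟩ := hn
  rw [← two_mul, Nat.mul_dvd_mul_iff_left two_pos, Nat.mul_div_cancel_left _ two_pos]
  simp only [mem_insert, mem_singleton]
  constructor
  · rintro ⟨t, rfl⟩
    rcases Nat.eq_zero_or_pos m with rfl | hm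
    · simp
    have ht : t ≤ 2 := Nat.le_of_mul_le_mul_left (by linarith) hm
    interval_cases t <;> omega
  · rintro (rfl | rfl | rfl) <;> simp

theorem ZMod.sum_ite_mem_one_neg_one_eq_zero_iff {n : ℕ} [NeZero n] (hn : Even n)
    (S : Finset (ZMod n)) :
    ∑ i, (if i ∈ S then (1 : ZMod n) else -1) = 0 ↔ #S ∈ ({0, n / 2, n} : Finset ℕ) := by
  rw [sum_ite_mem_one_neg_one, ZMod.card, ZMod.natCast_self, sub_zero, ← Nat.cast_ofNat,
    ← Nat.cast_mul, ZMod.natCast_eq_zero_iff]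
  exact Nat.dvd_two_mul_iff_of_even hn ((card_le_univ S).trans_eq (ZMod.card n))

/-- For even `n ≥ 4`, `|End(C_n)| = 2n + n·C(n, n/2)`. -/
theorem card_end_cycle_even (n : ℕ) (hn : 4 ≤ n) (heven : Even n) :
    Nat.card {α : ZMod n → ZMod n | IsEndCycle n α} =
      2 * n + n * Nat.choose n (n / 2) := by
  have : NeZero n := ⟨by omega⟩
  have : Fact (2 < n) := ⟨by omega⟩
  calc Nat.card {α : ZMod n → ZMod n | IsEndCycle n α}
      = Nat.card (ZMod n ×
          {ε : ZMod n → ZMod n // ∑ i, ε i = 0 ∧ ∀ i, ε i ∈ ({1, -1} : Set _)}) :=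
        Nat.card_congr (ZMod.cycleDiffEquiv _)
    _ = n * Nat.card {S : Finset (ZMod n) // ∑ i, (if i ∈ S then (1 : ZMod n) else -1) = 0} := by
        rw [Nat.card_prod, Nat.card_zmod,
          Nat.card_congr (signFunEquivFinset ZMod.neg_one_ne_one.symm _)]
    _ = n * #{S : Finset (ZMod n) | #S ∈ ({0, n / 2, n} : Finset ℕ)} := by
        simp_rw [ZMod.sum_ite_mem_one_neg_one_eq_zero_iff heven, Nat.card_eq_fintype_card,
          Fintype.card_subtype]
    _ = 2 * n + n * Nat.choose n (n / 2) := by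
        rw [card_filter_card_mem, ZMod.card,
          sum_insert (by simp only [mem_insert, mem_singleton]; omega),
          sum_insert (by simp only [mem_singleton]; omega), sum_singleton,
          Nat.choose_zero_right, Nat.choose_self]
        ring
end

section
/- For n ≥ 3, the number of weak endomorphisms of the cycle graph C_n is 3n + 2n·∑_{k=1}^{⌊n/2⌋} C(2k-1, k)·C(n, 2k). -/
open Finset

section CyclicDiff

variable {n : ℕ} {G : Type*} [AddCommGroup G]

def cyclicDiff (α : ZMod n → G) (i : ZMod n) : G := α (i + 1) - α i

variable [NeZero n]

def partialSumFrom (a : G) (d : ZMod n → G) (i : ZMod n) : G := a + ∑ j ∈ range i.val, d j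

theorem sum_cyclicDiff (α : ZMod n → G) : ∑ i, cyclicDiff α i = 0 := by
  simp only [cyclicDiff, sum_sub_distrib, sub_eq_zero]
  exact Equiv.sum_comp (Equiv.addRight 1) α

theorem ZMod.sum_range_eq_sum_univ (f : ZMod n → G) : ∑ j ∈ range n, f j = ∑ i, f i :=
  sum_nbij' (fun j => (j : ZMod n)) ZMod.val (by simp) (by simp [ZMod.val_lt])
    (fun j hj => ZMod.val_cast_of_lt (mem_range.1 hj)) (by simp) (by simp)

theorem ZMod.val_add_one_eq_mod (i : ZMod n) : (i + 1).val = (i.val + 1) % n := by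
  rw [ZMod.val_add, ZMod.val_one_eq_one_mod, Nat.add_mod_mod]

theorem partialSumFrom_cyclicDiff (α : ZMod n → G) :
    partialSumFrom (α 0) (cyclicDiff α) = α := by
  funext i
  have htelescope := sum_range_sub (fun j : ℕ => α j) i.val
  simp only [Nat.cast_add, Nat.cast_one, ZMod.natCast_zmod_val, Nat.cast_zero] at htelescope
  simp [partialSumFrom, cyclicDiff, htelescope]

theorem cyclicDiff_partialSumFrom (a : G) {d : ZMod n → G} (hd : ∑ i, d i = 0) :
    cyclicDiff (partialSumFrom a d) = d := by
  funext i
  simp only [cyclicDiff, partialSumFrom, add_sub_add_left_eq_sub, ZMod.val_add_one_eq_mod]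
  rcases (Nat.succ_le_of_lt i.val_lt).lt_or_eq with hlt | hwrap
  · rw [Nat.mod_eq_of_lt hlt, sum_range_succ, ZMod.natCast_zmod_val, add_sub_cancel_left]
  · -- at `i = n - 1` the partial sums wrap around, and `∑ d = 0` closes the cycle
    have hfull := ZMod.sum_range_eq_sum_univ d
    rw [hd, congrArg range hwrap.symm, sum_range_succ, ZMod.natCast_zmod_val] at hfull
    rw [show i.val + 1 = n from hwrap, Nat.mod_self, sum_range_zero, zero_sub,
      ← add_eq_zero_iff_neg_eq, hfull]

def cyclicDiffEquiv (P : (ZMod n → G) → Prop) :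
    {α : ZMod n → G // P (cyclicDiff α)} ≃ G × {d : ZMod n → G // ∑ i, d i = 0 ∧ P d} where
  toFun α := (α.1 0, ⟨cyclicDiff α.1, sum_cyclicDiff α.1, α.2⟩)
  invFun p := ⟨partialSumFrom p.1 p.2.1, by
    rw [cyclicDiff_partialSumFrom _ p.2.2.1]; exact p.2.2.2⟩
  left_inv α := Subtype.ext (partialSumFrom_cyclicDiff α.1)
  right_inv p := by
    ext
    · simp [partialSumFrom]
    · simp [cyclicDiff_partialSumFrom _ p.2.2.1]

end CyclicDiff

section SignPatterns

variable {ι R : Type*} [Ring R]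

theorem disjoint_filter_eq_one_filter_eq_neg_one [Fintype ι] [DecidableEq R]
    (h : (1 : R) ≠ -1) (d : ι → R) : Disjoint (univ.filter (d · = 1)) (univ.filter (d · = -1)) := by
  rw [disjoint_filter]
  exact fun _ _ hi hi' => h (hi.symm.trans hi')

variable [DecidableEq ι]

def signIndicator (A B : Finset ι) (i : ι) : R :=
  (if i ∈ A then 1 else 0) - (if i ∈ B then 1 else 0)

theorem sum_signIndicator [Fintype ι] (A B : Finset ι) :
    ∑ i, signIndicator A B i = (#A : R) - #B := by
  simp [signIndicator, sum_sub_distrib]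

theorem signIndicator_eq_one_iff (h : (1 : R) ≠ -1) {A B : Finset ι} (hAB : Disjoint A B)
    (i : ι) : signIndicator A B i = (1 : R) ↔ i ∈ A := by
  have h0 : (1 : R) ≠ 0 := fun h0 => h (by rw [h0, neg_zero])
  have hi : i ∈ A → i ∉ B := fun hA => disjoint_left.1 hAB hA
  unfold signIndicator
  split_ifs <;> simp_all [eq_comm]

theorem signIndicator_eq_neg_one_iff (h : (1 : R) ≠ -1) {A B : Finset ι} (hAB : Disjoint A B)
    (i : ι) : signIndicator A B i = (-1 : R) ↔ i ∈ B := by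
  have h0 : (1 : R) ≠ 0 := fun h0 => h (by rw [h0, neg_zero])
  have hi : i ∈ A → i ∉ B := fun hA => disjoint_left.1 hAB hA
  unfold signIndicator
  split_ifs <;> simp_all [eq_comm]

variable [Fintype ι] [DecidableEq R]

theorem signIndicator_filter (h : (1 : R) ≠ -1) {d : ι → R}
    (hd : ∀ i, d i ∈ ({0, 1, -1} : Set R)) :
    signIndicator (univ.filter (d · = 1)) (univ.filter (d · = -1)) = d := by
  funext i
  have h0 : (1 : R) ≠ 0 := fun h0 => h (by rw [h0, neg_zero])
  rcases hd i with hi | hi | hi <;> simp_all [signIndicator, eq_comm]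

def zeroSumSignEquiv (h : (1 : R) ≠ -1) :
    {d : ι → R // ∑ i, d i = 0 ∧ ∀ i, d i ∈ ({0, 1, -1} : Set R)} ≃
      {AB : Finset ι × Finset ι // Disjoint AB.1 AB.2 ∧ (#AB.1 : R) = #AB.2} where
  toFun d := ⟨(univ.filter (d.1 · = 1), univ.filter (d.1 · = -1)),
    disjoint_filter_eq_one_filter_eq_neg_one h d.1,
    by rw [← sub_eq_zero, ← sum_signIndicator, signIndicator_filter h d.2.2, d.2.1]⟩
  invFun AB := ⟨signIndicator AB.1.1 AB.1.2, by rw [sum_signIndicator, AB.2.2, sub_self], by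
    intro i; unfold signIndicator; split_ifs <;> simp⟩
  left_inv d := Subtype.ext (signIndicator_filter h d.2.2)
  right_inv AB := by
    ext i
    · simp [signIndicator_eq_one_iff h AB.2.1]
    · simp [signIndicator_eq_neg_one_iff h AB.2.1]

end SignPatterns

theorem Nat.centralBinom_eq_two_mul_choose_sub_one {k : ℕ} (hk : 0 < k) :
    k.centralBinom = 2 * (2 * k - 1).choose k := by
  obtain ⟨m, rfl⟩ : ∃ m, k = m + 1 := ⟨k - 1, by omega⟩
  rw [Nat.centralBinom_eq_two_mul_choose, show 2 * (m + 1) - 1 = 2 * m + 1 by omega,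
    show 2 * (m + 1) = 2 * m + 1 + 1 by ring, Nat.choose_succ_succ, Nat.choose_symm_half]
  ring

section DisjointPairs

variable {ι : Type*} [Fintype ι] [DecidableEq ι]

theorem card_disjoint_pairs_of_card_eq (k : ℕ) :
    #{AB : Finset ι × Finset ι | Disjoint AB.1 AB.2 ∧ #AB.1 = k ∧ #AB.2 = k} =
      (Fintype.card ι).choose (2 * k) * k.centralBinom := by
  -- `(A, B)` corresponds to its union `C`, of size `2k`, together with `A ⊆ C`
  rw [card_nbij' (fun AB => (⟨AB.1 ∪ AB.2, AB.1⟩ : Σ _ : Finset ι, Finset ι))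
    (fun CA => (CA.2, CA.1 \ CA.2)) (t := (powersetCard (2 * k) univ).sigma (powersetCard k))]
  · rw [card_sigma, sum_congr rfl fun C hC => by
      rw [card_powersetCard, (mem_powersetCard.1 hC).2], sum_const, card_powersetCard,
      card_univ, smul_eq_mul, Nat.centralBinom_eq_two_mul_choose]
  · rintro ⟨A, B⟩ hAB
    simp only [coe_filter, Set.mem_ofPred_eq, mem_univ, true_and] at hAB
    obtain ⟨hd, hA, hB⟩ := hAB
    simp only [coe_sigma, Set.mem_sigma_iff, mem_coe, mem_powersetCard]
    refine ⟨⟨subset_univ _, ?_⟩, subset_union_left, hA⟩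
    rw [card_union_of_disjoint hd, hA, hB, two_mul]
  · rintro ⟨C, A⟩ hCA
    simp only [coe_sigma, Set.mem_sigma_iff, mem_coe, mem_powersetCard] at hCA
    obtain ⟨⟨-, hC⟩, hAC, hA⟩ := hCA
    simp only [coe_filter, Set.mem_ofPred_eq, mem_univ, true_and]
    refine ⟨disjoint_sdiff, hA, ?_⟩
    rw [card_sdiff_of_subset hAC, hC, hA]
    omega
  · rintro ⟨A, B⟩ hAB
    simp only [coe_filter, Set.mem_ofPred_eq, mem_univ, true_and] at hAB
    simp [union_sdiff_cancel_left hAB.1]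
  · rintro ⟨C, A⟩ hCA
    simp only [coe_sigma, Set.mem_sigma_iff, mem_coe, mem_powersetCard] at hCA
    simp [union_sdiff_of_subset hCA.2.1]

theorem card_disjoint_pairs_card_eq_card :
    #{AB : Finset ι × Finset ι | Disjoint AB.1 AB.2 ∧ #AB.1 = #AB.2} =
      ∑ k ∈ range (Fintype.card ι / 2 + 1), (Fintype.card ι).choose (2 * k) * k.centralBinom := by
  rw [card_eq_sum_card_fiberwise (f := fun AB => #AB.1) (t := range (Fintype.card ι / 2 + 1))]
  · refine sum_congr rfl fun k _ => ?_
    rw [filter_filter, ← card_disjoint_pairs_of_card_eq k]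
    congr 1
    refine filter_congr fun AB _ => ?_
    constructor
    · rintro ⟨⟨hd, hc⟩, hk⟩; exact ⟨hd, hk, hc ▸ hk⟩
    · rintro ⟨hd, hA, hB⟩; exact ⟨⟨hd, hA.trans hB.symm⟩, hA⟩
  · rintro ⟨A, B⟩ hAB
    simp only [coe_filter, Set.mem_ofPred_eq, mem_univ, true_and] at hAB
    have := card_union_of_disjoint hAB.1 ▸ card_le_univ (A ∪ B)
    simp only [coe_range, Set.mem_Iio]
    omega

theorem disjoint_and_natCast_card_eq_iff {n : ℕ} (hι : Fintype.card ι = n) {A B : Finset ι} :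
    Disjoint A B ∧ (#A : ZMod n) = #B ↔
      Disjoint A B ∧ #A = #B ∨ A = univ ∧ B = ∅ ∨ A = ∅ ∧ B = univ := by
  constructor
  · rintro ⟨hd, hc⟩
    by_cases hA : A = univ
    · exact Or.inr (Or.inl ⟨hA, by subst hA; exact top_disjoint.1 hd⟩)
    by_cases hB : B = univ
    · exact Or.inr (Or.inr ⟨by subst hB; exact disjoint_top.1 hd, hB⟩)
    replace hA := hι ▸ (card_lt_iff_ne_univ A).2 hA
    replace hB := hι ▸ (card_lt_iff_ne_univ B).2 hB
    rw [ZMod.natCast_eq_natCast_iff', Nat.mod_eq_of_lt hA, Nat.mod_eq_of_lt hB] at hc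
    exact Or.inl ⟨hd, hc⟩
  · rintro (⟨hd, hc⟩ | ⟨rfl, rfl⟩ | ⟨rfl, rfl⟩)
    · exact ⟨hd, congrArg _ hc⟩
    all_goals simp [hι]

theorem card_disjoint_pairs_natCast_card_eq {n : ℕ} (hι : Fintype.card ι = n) (hn : 0 < n) :
    Nat.card {AB : Finset ι × Finset ι // Disjoint AB.1 AB.2 ∧ (#AB.1 : ZMod n) = #AB.2} =
      ∑ k ∈ range (n / 2 + 1), n.choose (2 * k) * k.centralBinom + 2 := by
  have hpair :
      #{AB : Finset ι × Finset ι | AB.1 = univ ∧ AB.2 = ∅ ∨ AB.1 = ∅ ∧ AB.2 = univ} = 2 := by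
    have huniv : (univ : Finset ι) ≠ ∅ :=
      (univ_nonempty_iff.2 (Fintype.card_pos_iff.1 (hι ▸ hn))).ne_empty
    have hne : ((univ, ∅) : Finset ι × Finset ι) ≠ (∅, univ) :=
      fun h => huniv (congrArg Prod.fst h)
    rw [← card_pair hne]
    congr 1
    ext ⟨A, B⟩
    simp
  rw [Nat.card_eq_fintype_card, Fintype.card_subtype]
  simp_rw [disjoint_and_natCast_card_eq_iff hι]
  rw [filter_or, card_union_of_disjoint, card_disjoint_pairs_card_eq_card, hι, hpair]
  rw [disjoint_filter]
  rintro ⟨A, B⟩ - ⟨-, hc⟩ (⟨rfl, rfl⟩ | ⟨rfl, rfl⟩) <;> simp [hι] at hc <;> omega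

end DisjointPairs

/-- For `n ≥ 3`, `|wEnd(C_n)| = 3n + 2n·∑_{k=1}^{⌊n/2⌋} C(2k-1,k)·C(n,2k)`. -/
theorem card_wEnd_cycle (n : ℕ) (hn : 3 ≤ n) :
    Nat.card {α : ZMod n → ZMod n | IsWeakEndCycle n α} =
      3 * n + 2 * n * ∑ k ∈ Finset.Icc 1 (n / 2),
        Nat.choose (2 * k - 1) k * Nat.choose n (2 * k) := by
  have : NeZero n := ⟨by omega⟩
  have : Fact (2 < n) := ⟨hn⟩
  have hcount : Nat.card {α : ZMod n → ZMod n | IsWeakEndCycle n α} =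
      n * (∑ k ∈ range (n / 2 + 1), n.choose (2 * k) * k.centralBinom + 2) := by
    rw [Nat.card_congr (α := {α : ZMod n → ZMod n | IsWeakEndCycle n α})
        (cyclicDiffEquiv fun d => ∀ i, d i ∈ ({0, 1, -1} : Set (ZMod n))),
      Nat.card_prod, Nat.card_zmod, Nat.card_congr (zeroSumSignEquiv ZMod.neg_one_ne_one.symm),
      card_disjoint_pairs_natCast_card_eq (ZMod.card n) (by omega)]
  have hsum : ∑ k ∈ Icc 1 (n / 2), n.choose (2 * k) * k.centralBinom =
      2 * ∑ k ∈ Icc 1 (n / 2), (2 * k - 1).choose k * n.choose (2 * k) := by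
    rw [mul_sum]
    refine sum_congr rfl fun k hk => ?_
    rw [Nat.centralBinom_eq_two_mul_choose_sub_one (mem_Icc.1 hk).1]
    ring
  rw [hcount, range_eq_Ico, sum_eq_sum_Ico_succ_bot (Nat.succ_pos _), zero_add,
    Nat.succ_eq_add_one, Ico_add_one_right_eq_Icc, hsum, mul_zero, Nat.choose_zero_right,
    Nat.centralBinom_zero]
  ring
end

section
/- Let α be an endomorphism of the cycle graph C_n. Then α is regular in the monoid End(C_n) if and only if α is regular in the monoid wEnd(C_n). -/
/-!
If `α = α ∘ β ∘ α` with `β` a weak endomorphism, then `γ := β ∘ α` satisfies `α ∘ γ = α`, so `γ`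
identifies exactly the vertices that `α` identifies. Hence `γ` never stands still, and it turns
back exactly where `α` does. So `γ` follows `α` up to a global sign, `γ = γ 0 + ε (α - α 0)` with
`ε = ±1`, and the automorphism `y ↦ γ 0 + ε (y - α 0)` of `C_n` agrees with `β` on the image
of `α`; it is therefore an inverse of `α` inside `End(C_n)`.
-/

section PmOne

variable {R : Type*} [CommRing R] {u v u' v' : R}

lemma mul_self_of_mem_pmOne (hu : u ∈ ({1, -1} : Set R)) : u * u = 1 := by
  rcases hu with rfl | rfl <;> simp

lemma mul_mem_pmOne (hu : u ∈ ({1, -1} : Set R)) (hv : v ∈ ({1, -1} : Set R)) :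
    u * v ∈ ({1, -1} : Set R) := by
  rcases hu with rfl | rfl <;> rcases hv with rfl | rfl <;> simp

lemma eq_of_ne_neg_of_mem_pmOne (hu : u ∈ ({1, -1} : Set R)) (hv : v ∈ ({1, -1} : Set R))
    (h : v ≠ -u) : v = u := by
  rcases hu with rfl | rfl <;> rcases hv with rfl | rfl <;> simp_all

lemma mul_eq_mul_of_neg_iff_of_mem_pmOne (hu : u ∈ ({1, -1} : Set R))
    (hu' : u' ∈ ({1, -1} : Set R)) (hv : v ∈ ({1, -1} : Set R)) (hv' : v' ∈ ({1, -1} : Set R))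
    (h : u' = -u ↔ v' = -v) : v' * u' = v * u := by
  by_cases hturn : u' = -u
  · rw [hturn, h.mp hturn, neg_mul_neg]
  · rw [eq_of_ne_neg_of_mem_pmOne hu hu' hturn, eq_of_ne_neg_of_mem_pmOne hv hv' (mt h.mpr hturn)]

end PmOne

lemma ZMod.apply_eq_apply_zero_of_add_one {n : ℕ} {M : Type*} {u : ZMod n → M}
    (h : ∀ i, u (i + 1) = u i) (x : ZMod n) : u x = u 0 := by
  obtain ⟨k, rfl⟩ := ZMod.intCast_surjective x
  simpa using Function.Periodic.int_mul_eq h k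

section Cycle

variable {n : ℕ}

lemma IsEndCycle.isWeakEndCycle {α : ZMod n → ZMod n} (hα : IsEndCycle n α) :
    IsWeakEndCycle n α :=
  fun i => Set.mem_insert_of_mem _ (hα i)

lemma isEndCycle_affine {ε : ZMod n} (hε : ε ∈ ({1, -1} : Set (ZMod n))) (a c : ZMod n) :
    IsEndCycle n fun y => c + ε * (y - a) := by
  intro i
  convert hε using 1
  ring

lemma IsWeakEndCycle.sub_mem_of_sub_mem {β : ZMod n → ZMod n} (hβ : IsWeakEndCycle n β)
    {x y : ZMod n} (hxy : y - x ∈ ({1, -1} : Set (ZMod n))) :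
    β y - β x ∈ ({0, 1, -1} : Set (ZMod n)) := by
  rw [Set.mem_insert_iff, Set.mem_singleton_iff] at hxy
  rcases hxy with h | h
  · rw [eq_add_of_sub_eq' h]
    exact hβ x
  · have hback := hβ y
    rw [show y + 1 = x by linear_combination h] at hback
    simp only [Set.mem_insert_iff, Set.mem_singleton_iff] at hback ⊢
    rw [← neg_sub, neg_eq_zero, neg_eq_iff_eq_neg, neg_inj]
    tauto

lemma IsWeakEndCycle.comp {α β : ZMod n → ZMod n} (hβ : IsWeakEndCycle n β)
    (hα : IsEndCycle n α) : IsWeakEndCycle n (β ∘ α) :=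
  fun i => hβ.sub_mem_of_sub_mem (hα i)

lemma IsWeakEndCycle.isEndCycle_of_eq_imp_eq {α γ : ZMod n → ZMod n} (hγ : IsWeakEndCycle n γ)
    (hα : IsEndCycle n α) (h : ∀ i, γ (i + 1) = γ i → α (i + 1) = α i) : IsEndCycle n γ := by
  intro i
  rcases hγ i with hstill | hmove
  · have hαstill : α (i + 1) - α i = 0 := sub_eq_zero.mpr (h i (sub_eq_zero.mp hstill))
    rw [hstill, ← hαstill]
    exact hα i
  · exact hmove

lemma IsEndCycle.eq_affine_of_turn_iff {f g : ZMod n → ZMod n} (hf : IsEndCycle n f)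
    (hg : IsEndCycle n g) (hturn : ∀ i, g (i + 2) = g i ↔ f (i + 2) = f i) :
    ∃ ε ∈ ({1, -1} : Set (ZMod n)), ∀ x, g x = g 0 + ε * (f x - f 0) := by
  have hturn_step : ∀ i, f (i + 1 + 1) - f (i + 1) = -(f (i + 1) - f i) ↔
      g (i + 1 + 1) - g (i + 1) = -(g (i + 1) - g i) := by
    intro i
    simp only [neg_sub, sub_left_inj, add_assoc, one_add_one_eq_two]
    exact (hturn i).symm
  -- The product of the steps of `g` and `f` is invariant, as both change sign at the same places.
  set ε := (g (0 + 1) - g 0) * (f (0 + 1) - f 0)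
  have hratio : ∀ i, (g (i + 1) - g i) * (f (i + 1) - f i) = ε :=
    ZMod.apply_eq_apply_zero_of_add_one fun i =>
      mul_eq_mul_of_neg_iff_of_mem_pmOne (hf i) (hf (i + 1)) (hg i) (hg (i + 1)) (hturn_step i)
  have hstep : ∀ i, g (i + 1) - ε * f (i + 1) = g i - ε * f i := fun i => by
    linear_combination (-(g (i + 1) - g i)) * mul_self_of_mem_pmOne (hf i) +
      (f (i + 1) - f i) * hratio i
  refine ⟨ε, mul_mem_pmOne (hg 0) (hf 0), fun x => ?_⟩
  linear_combination ZMod.apply_eq_apply_zero_of_add_one (u := fun y => g y - ε * f y) hstep x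

end Cycle

theorem end_regular_iff_wEnd_regular_general (n : ℕ) (α : ZMod n → ZMod n)
    (hα : IsEndCycle n α) :
    (∃ β : ZMod n → ZMod n, IsEndCycle n β ∧ α = α ∘ β ∘ α) ↔
      (∃ β : ZMod n → ZMod n, IsWeakEndCycle n β ∧ α = α ∘ β ∘ α) := by
  refine ⟨fun ⟨β, hβ, hr⟩ => ⟨β, hβ.isWeakEndCycle, hr⟩, fun ⟨β, hβ, hr⟩ => ?_⟩
  set γ := β ∘ α
  have hαγ : ∀ x, α (γ x) = α x := fun x => (congrFun hr x).symm
  have hfiber : ∀ x y, γ x = γ y ↔ α x = α y := fun x y =>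
    ⟨fun h => by rw [← hαγ x, h, hαγ], fun h => congrArg β h⟩
  have hγ : IsEndCycle n γ :=
    (hβ.comp hα).isEndCycle_of_eq_imp_eq hα fun _ => (hfiber _ _).mp
  obtain ⟨ε, hε, hγα⟩ := hα.eq_affine_of_turn_iff hγ fun _ => hfiber _ _
  refine ⟨fun y => γ 0 + ε * (y - α 0), isEndCycle_affine hε _ _, funext fun x => ?_⟩
  simp only [Function.comp_apply, ← hγα, hαγ]

/-- An endomorphism `α` of `C_n` is regular in the monoid `End(C_n)` iff it is regular
in the monoid `wEnd(C_n)`. -/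
theorem end_regular_iff_wEnd_regular (n : ℕ) (hn : 3 ≤ n) (α : ZMod n → ZMod n)
    (hα : IsEndCycle n α) :
    (∃ β : ZMod n → ZMod n, IsEndCycle n β ∧ α = α ∘ β ∘ α) ↔
      (∃ β : ZMod n → ZMod n, IsWeakEndCycle n β ∧ α = α ∘ β ∘ α) :=
  end_regular_iff_wEnd_regular_general n α hα
end

section
/- Let α be a weak endomorphism of the cycle graph C_n, and suppose j and j+1 both lie in the image of α (j mod n). Then there exists i with α(i) = j and such that α(i-1) = j+1 or α(i+1) = j+1. -/
namespace ZMod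

theorem val_neg_one_eq_sub_one (n : ℕ) [NeZero n] : (-1 : ZMod n).val = n - 1 := by
  obtain ⟨m, rfl⟩ := Nat.exists_eq_succ_of_ne_zero (NeZero.ne n)
  simp

variable {n : ℕ} [NeZero n]

theorem val_add_one_of_ne_neg_one {x : ZMod n} (hx : x ≠ -1) : (x + 1).val = x.val + 1 := by
  have hne : x.val ≠ n - 1 := fun h =>
    hx (val_injective n (h.trans (val_neg_one_eq_sub_one n).symm))
  have hlt := x.val_lt
  have hone : (1 : ZMod n).val = 1 := val_one'' (by rintro rfl; exact hx (Subsingleton.elim _ _))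
  rw [val_add_of_lt (by omega), hone]

theorem abs_val_sub_val_le_one {x y : ZMod n} (hxy : y - x ∈ ({0, 1, -1} : Set (ZMod n)))
    (hup : ¬(x = -1 ∧ y = 0)) (hdown : ¬(x = 0 ∧ y = -1)) : |(y.val : ℤ) - x.val| ≤ 1 := by
  simp only [Set.mem_insert_iff, Set.mem_singleton_iff, sub_eq_iff_eq_add] at hxy
  rcases hxy with rfl | rfl | rfl
  · simp
  · have hx : x ≠ -1 := fun hx => hup ⟨hx, by rw [hx, add_neg_cancel]⟩
    rw [add_comm, val_add_one_of_ne_neg_one hx]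
    simp
  · have hy : -1 + x ≠ -1 := fun hy => hdown ⟨by simpa using hy, hy⟩
    have hx := val_add_one_of_ne_neg_one hy
    rw [neg_add_cancel_comm] at hx
    rw [hx, abs_le]
    constructor <;> push_cast <;> linarith

end ZMod

namespace IsWeakEndCycle

variable {n : ℕ} [NeZero n] {α : ZMod n → ZMod n}

theorem abs_val_sub_le (hα : IsWeakEndCycle n α) {c : ZMod n}
    (hup : ∀ i, α i = c - 1 → α (i + 1) ≠ c) (hdown : ∀ i, α i = c → α (i + 1) ≠ c - 1)
    (i : ZMod n) (t : ℕ) : |((α (i + t) - c).val : ℤ) - (α i - c).val| ≤ t := by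
  induction t with
  | zero => simp
  | succ t ih =>
    have hstep : |((α (i + t + 1) - c).val : ℤ) - (α (i + t) - c).val| ≤ 1 := by
      refine ZMod.abs_val_sub_val_le_one ?_ ?_ ?_
      · simpa using hα (i + t)
      · rintro ⟨h₁, h₂⟩
        exact hup (i + t) (by linear_combination h₁) (by linear_combination h₂)
      · rintro ⟨h₁, h₂⟩
        exact hdown (i + t) (by linear_combination h₁) (by linear_combination h₂)
    rw [Nat.cast_succ, ← add_assoc]
    push_cast
    linarith [abs_sub_le ((α (i + t + 1) - c).val : ℤ) (α (i + t) - c).val (α i - c).val]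

end IsWeakEndCycle

/-- If `j` and `j + 1` both lie in the image of a weak endomorphism `α` of `C_n`, then
there is `i` with `α i = j` and `α (i - 1) = j + 1` or `α (i + 1) = j + 1`. -/
theorem consecutive_images (n : ℕ) (hn : 3 ≤ n) (α : ZMod n → ZMod n)
    (hα : IsWeakEndCycle n α) (j : ZMod n)
    (hj : j ∈ Set.range α) (hj1 : j + 1 ∈ Set.range α) :
    ∃ i : ZMod n, α i = j ∧ (α (i - 1) = j + 1 ∨ α (i + 1) = j + 1) := by
  have : Fact (1 < n) := ⟨by omega⟩
  by_contra! hcon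
  obtain ⟨a, ha⟩ := hj
  obtain ⟨b, hb⟩ := hj1
  have hup : ∀ i, α i = j + 1 - 1 → α (i + 1) ≠ j + 1 := fun i hi =>
    (hcon i (by simpa using hi)).2
  have hdown : ∀ i, α i = j + 1 → α (i + 1) ≠ j + 1 - 1 := fun i hi hi' =>
    (hcon (i + 1) (by simpa using hi')).1 (by simpa using hi)
  have hab : b - a ≠ 0 := fun h => by
    rw [sub_eq_zero.mp h, ha, left_eq_add] at hb
    exact one_ne_zero hb
  have hval_a : ((α a - (j + 1)).val : ℤ) = n - 1 := by
    rw [ha, sub_add_cancel_left, ZMod.val_neg_one_eq_sub_one]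
    omega
  have hval_b : (α b - (j + 1)).val = 0 := by rw [hb, sub_self, ZMod.val_zero]
  have hfwd := hα.abs_val_sub_le hup hdown a (b - a).val
  have hbwd := hα.abs_val_sub_le hup hdown b (a - b).val
  rw [ZMod.natCast_zmod_val, add_sub_cancel, hval_a, hval_b] at hfwd hbwd
  rw [← neg_sub b a, ZMod.neg_val, if_neg hab] at hbwd
  have hlt := (b - a).val_lt
  rw [abs_le] at hfwd hbwd
  push_cast [hlt.le] at hfwd hbwd
  omega
end
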